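/- arXiv:2209.10135 — 2 statements merged into one kernel-verified Lean document; each statement's English description precedes it below -/
import Mathlib

section
/- If u ∈ C and v lies in the closure of C with v ≠ 0, then (u, v) > 0. (Reverse Cauchy–Schwarz for Lorentzian forms: two nonzero vectors in the closure of the same positive cone have nonnegative pairing, strictly positive if one of them has positive norm.) -/
/-!
A vector `v` with `0 ≤ (v, v)` that is orthogonal to some `u` with `0 < (u, u)` vanishes, since
the form is negative definite on `e^⊥`. Hence `w ↦ (u, w)` has no zero on the preconnected set
`C` and is positive at `u`, so it is positive on `C`, nonnegative on its closure, and, by the same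
fact, nonzero at `v`.
-/

theorem IsPreconnected.pos_of_pos_of_ne_zero {X : Type*} [TopologicalSpace X] {s : Set X}
    (hs : IsPreconnected s) {f : X → ℝ} (hf : ContinuousOn f s) (hne : ∀ x ∈ s, f x ≠ 0)
    {a b : X} (ha : a ∈ s) (hb : b ∈ s) (hfa : 0 < f a) : 0 < f b := by
  by_contra! hfb
  obtain ⟨x, hx, hfx⟩ := hs.intermediate_value₂ hb ha hf continuousOn_const hfb hfa.le
  exact hne x hx hfx

namespace LinearMap

variable {M : Type*} [AddCommGroup M]

section OrderedField

variable {𝕜 : Type*} [Field 𝕜] [LinearOrder 𝕜] [IsStrictOrderedRing 𝕜] [Module 𝕜 M]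
  (B : M →ₗ[𝕜] M →ₗ[𝕜] 𝕜) (hsymm : ∀ v w, B v w = B w v) {e : M}
  (hneg : ∀ w, B e w = 0 → w ≠ 0 → B w w < 0)
include hsymm hneg

theorem eq_zero_of_apply_eq_zero_of_pos_of_nonneg {u v : M} (hu : 0 < B u u) (huv : B u v = 0)
    (hv : 0 ≤ B v v) : v = 0 := by
  have hu0 : u ≠ 0 := by rintro rfl; simp at hu
  have heu : B e u ≠ 0 := fun h => (hneg u h hu0).not_gt hu
  -- `z` lies both in `e^⊥`, where `B` is negative definite, and in the span of `u` and `v`,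
  -- where `B` is positive semidefinite.
  set z := B e v • u - B e u • v with hz
  have hez : B e z = 0 := by simp only [hz, map_sub, map_smul, smul_eq_mul]; ring
  have hzz : B z z = B e v ^ 2 * B u u + B e u ^ 2 * B v v := by
    simp only [hz, map_sub, map_smul, sub_apply, smul_apply, smul_eq_mul, hsymm v u, huv]
    ring
  have hz0 : z = 0 := by
    by_contra hz0
    nlinarith [hneg z hez hz0, sq_nonneg (B e v), sq_nonneg (B e u)]
  rw [hz, sub_eq_zero] at hz0
  have hev : B e v = 0 := by
    have h := congrArg (B u) hz0
    simp only [map_smul, smul_eq_mul, huv, mul_zero] at h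
    exact (mul_eq_zero.mp h).resolve_right hu.ne'
  rw [hev, zero_smul, eq_comm, smul_eq_zero] at hz0
  exact hz0.resolve_left heu

end OrderedField

variable [Module ℝ M] [TopologicalSpace M] [IsModuleTopology ℝ M] (B : M →ₗ[ℝ] M →ₗ[ℝ] ℝ)
  {C : Set M}

theorem continuous_apply_self [Module.Finite ℝ M] : Continuous fun v => B v v :=
  (IsModuleTopology.continuous_bilinear_of_finite_left B).comp (continuous_id.prodMk continuous_id)

theorem apply_self_nonneg_of_mem_closure [Module.Finite ℝ M] (hC : C ⊆ {v | 0 < B v v}) {v : M}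
    (hv : v ∈ closure C) : 0 ≤ B v v :=
  closure_minimal (fun _ hw => (hC hw).le) (isClosed_le continuous_const B.continuous_apply_self) hv

variable (hsymm : ∀ v w, B v w = B w v) {e : M} (hneg : ∀ w, B e w = 0 → w ≠ 0 → B w w < 0)
  (hC : C ⊆ {v | 0 < B v v}) (hCconn : IsPreconnected C)
include hsymm hneg hC hCconn

theorem apply_pos_of_mem {u w : M} (hu : u ∈ C) (hw : w ∈ C) : 0 < B u w := by
  refine hCconn.pos_of_pos_of_ne_zero (IsModuleTopology.continuous_of_linearMap (B u)).continuousOn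
    (fun x hx hux => ?_) hu hw (hC hu)
  have hx0 := B.eq_zero_of_apply_eq_zero_of_pos_of_nonneg hsymm hneg (hC hu) hux (hC hx).le
  simpa [hx0] using hC hx

theorem apply_nonneg_of_mem_closure {u v : M} (hu : u ∈ C) (hv : v ∈ closure C) : 0 ≤ B u v :=
  closure_minimal (fun _ hw => (B.apply_pos_of_mem hsymm hneg hC hCconn hu hw).le)
    (isClosed_le continuous_const (IsModuleTopology.continuous_of_linearMap (B u))) hv

end LinearMap

theorem lorentzian_reverse_cauchy_schwarz_general {n : ℕ}
    (B : (Fin n → ℝ) →ₗ[ℝ] (Fin n → ℝ) →ₗ[ℝ] ℝ)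
    (hsymm : ∀ v w, B v w = B w v)
    (hsig : ∃ e : Fin n → ℝ, 0 < B e e ∧ ∀ w, B e w = 0 → w ≠ 0 → B w w < 0)
    (C : Set (Fin n → ℝ))
    (hC : ∃ u, 0 < B u u ∧ C = connectedComponentIn {v | 0 < B v v} u) :
    ∀ u ∈ C, ∀ v ∈ closure C, v ≠ 0 → 0 < B u v := by
  obtain ⟨e, -, hneg⟩ := hsig
  obtain ⟨u₀, -, rfl⟩ := hC
  intro u hu v hv hv0
  have hCpos := connectedComponentIn_subset {v | 0 < B v v} u₀
  have hCconn := isPreconnected_connectedComponentIn (F := {v | 0 < B v v}) (x := u₀)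
  refine (B.apply_nonneg_of_mem_closure hsymm hneg hCpos hCconn hu hv).lt_of_ne' fun huv => hv0 ?_
  exact B.eq_zero_of_apply_eq_zero_of_pos_of_nonneg hsymm hneg (hCpos hu) huv
    (B.apply_self_nonneg_of_mem_closure hCpos hv)

/-- Reverse Cauchy–Schwarz for Lorentzian forms: if `u` lies in the positive cone
`C` and `v ≠ 0` lies in the closure of `C`, then `(u, v) > 0`. -/
theorem lorentzian_reverse_cauchy_schwarz {n : ℕ} (hn : 2 ≤ n)
    (B : (Fin n → ℝ) →ₗ[ℝ] (Fin n → ℝ) →ₗ[ℝ] ℝ)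
    (hsymm : ∀ v w, B v w = B w v)
    (hsig : ∃ e : Fin n → ℝ, 0 < B e e ∧ ∀ w, B e w = 0 → w ≠ 0 → B w w < 0)
    (C : Set (Fin n → ℝ))
    (hC : ∃ u, 0 < B u u ∧ C = connectedComponentIn {v | 0 < B v v} u) :
    ∀ u ∈ C, ∀ v ∈ closure C, v ≠ 0 → 0 < B u v :=
  lorentzian_reverse_cauchy_schwarz_general B hsymm hsig C hC
end

section
/- The closure of the positive cone C is self-dual: closure(C) = {v ∈ V : (v, w) ≥ 0 for all w ∈ C}. -/
/-!
Let `e` be timelike with negative definite orthogonal complement, `S = {v | 0 < B v v ∧ 0 < B e v}`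
and `K = {v | 0 ≤ B v v ∧ 0 ≤ B e v}`. For `v, w ∈ K` the vector `B e w • v - B e v • w` is
orthogonal to `e`, so its square is `≤ 0`; expanded, this is the reverse Cauchy–Schwarz inequality
`0 ≤ B v w`, whence `K ⊆ S^*`. Conversely, if `B e v ≥ 0` but `B v v < 0`, then
`t = B e v • v - B v v • e` is timelike, future-directed and orthogonal to `v`, so `c • t + v ∈ S`
for large `c` while `B v (c • t + v) = B v v < 0`; thus `S^* = K`. As `K` is closed and
`v + ε • e ∈ S` for `v ∈ K`, `ε > 0`, also `closure S = K`. Finally `S` is convex, and the timelike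
vectors split into the open halves `0 < B e v` and `B e v < 0`, so after replacing `e` by `-e` if
necessary, `S` is the connected component `C`.
-/

open Set Filter Topology

namespace LorentzCone

variable {E : Type*} [AddCommGroup E] [Module ℝ E] {B : E →ₗ[ℝ] E →ₗ[ℝ] ℝ} {e : E}

def futureCone (B : E →ₗ[ℝ] E →ₗ[ℝ] ℝ) (e : E) : Set E := {v | 0 < B v v ∧ 0 < B e v}

def closedFutureCone (B : E →ₗ[ℝ] E →ₗ[ℝ] ℝ) (e : E) : Set E := {v | 0 ≤ B v v ∧ 0 ≤ B e v}

lemma futureCone_subset_closedFutureCone : futureCone B e ⊆ closedFutureCone B e :=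
  fun _ hv => ⟨hv.1.le, hv.2.le⟩

lemma apply_smul_add_smul_self (hsymm : ∀ v w, B v w = B w v) (a b : ℝ) (v w : E) :
    B (a • v + b • w) (a • v + b • w) = a ^ 2 * B v v + 2 * a * b * B v w + b ^ 2 * B w w := by
  simp only [map_add, map_smul, LinearMap.add_apply, LinearMap.smul_apply, smul_eq_mul]
  rw [hsymm w v]
  ring

lemma exists_mem_futureCone_apply_neg (hsymm : ∀ v w, B v w = B w v) (he : 0 < B e e) {v : E}
    (hev : 0 ≤ B e v) (hv : B v v < 0) : ∃ w ∈ futureCone B e, B v w < 0 := by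
  set t := B e v • v + (-B v v) • e
  have het : B e t = B e v ^ 2 - B v v * B e e := by
    simp only [t, map_add, map_smul, smul_eq_mul]; ring
  have het_pos : 0 < B e t := by rw [het]; nlinarith [sq_nonneg (B e v)]
  have hvt : B v t = 0 := by
    simp only [t, map_add, map_smul, smul_eq_mul]; rw [hsymm v e]; ring
  have htt : B t t = -B v v * B e t := by
    rw [apply_smul_add_smul_self hsymm, het, hsymm v e]; ring
  set c := 1 + 1 / B e t
  have hc : 1 < c * B e t := by
    simp only [c, add_mul, one_div, inv_mul_cancel₀ het_pos.ne']; linarith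
  refine ⟨c • t + (1 : ℝ) • v, ⟨?_, ?_⟩, ?_⟩
  · have hc1 : 1 ≤ c := le_add_of_nonneg_right (by positivity)
    have hc2 : 1 < c ^ 2 * B e t := by nlinarith
    rw [apply_smul_add_smul_self hsymm, hsymm t v, hvt, htt]
    nlinarith
  · simp only [map_add, map_smul, smul_eq_mul]
    nlinarith
  · simp only [map_add, map_smul, smul_eq_mul, hvt]
    linarith

section Orthogonal

variable (hneg : ∀ w, B e w = 0 → w ≠ 0 → B w w < 0)
include hneg

lemma apply_self_nonpos_of_apply_eq_zero {v : E} (hev : B e v = 0) : B v v ≤ 0 := by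
  rcases eq_or_ne v 0 with rfl | hv
  · simp
  · exact (hneg v hev hv).le

lemma eq_zero_of_apply_eq_zero {v : E} (hev : B e v = 0) (hv : 0 ≤ B v v) : v = 0 :=
  by_contra fun h => (hneg v hev h).not_ge hv

lemma apply_ne_zero_of_apply_self_pos {v : E} (hv : 0 < B v v) : B e v ≠ 0 :=
  fun hev => (apply_self_nonpos_of_apply_eq_zero hneg hev).not_gt hv

lemma apply_nonneg_of_mem_closedFutureCone (hsymm : ∀ v w, B v w = B w v) {v w : E}
    (hv : v ∈ closedFutureCone B e) (hw : w ∈ closedFutureCone B e) : 0 ≤ B v w := by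
  obtain ⟨hvv, hev⟩ := hv
  obtain ⟨hww, hew⟩ := hw
  rcases hev.eq_or_lt with hev | hev
  · simp [eq_zero_of_apply_eq_zero hneg hev.symm hvv]
  rcases hew.eq_or_lt with hew | hew
  · simp [eq_zero_of_apply_eq_zero hneg hew.symm hww]
  have hx := apply_self_nonpos_of_apply_eq_zero hneg (v := B e w • v + (-B e v) • w)
    (by simp only [map_add, map_smul, smul_eq_mul]; ring)
  rw [apply_smul_add_smul_self hsymm] at hx
  have : 0 ≤ B e w * B e v * B v w := by
    nlinarith [mul_nonneg (sq_nonneg (B e w)) hvv, mul_nonneg (sq_nonneg (B e v)) hww]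
  exact nonneg_of_mul_nonneg_right this (mul_pos hew hev)

lemma convex_futureCone (hsymm : ∀ v w, B v w = B w v) : Convex ℝ (futureCone B e) := by
  intro v hv w hw a b ha hb hab
  have hvw := apply_nonneg_of_mem_closedFutureCone hneg hsymm
    (futureCone_subset_closedFutureCone hv) (futureCone_subset_closedFutureCone hw)
  obtain ⟨hvv, hev⟩ := hv
  obtain ⟨hww, hew⟩ := hw
  have hab' : 0 < a ∨ 0 < b := by
    by_contra! h; linarith [h.1.antisymm ha, h.2.antisymm hb]
  constructor
  · rw [apply_smul_add_smul_self hsymm]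
    rcases hab' with h | h <;> positivity
  · simp only [map_add, map_smul, smul_eq_mul]
    rcases hab' with h | h <;> positivity

theorem coe_dual_futureCone (hsymm : ∀ v w, B v w = B w v) (he : 0 < B e e) :
    (PointedCone.dual B.flip (futureCone B e) : Set E) = closedFutureCone B e := by
  ext v
  refine ⟨fun hv => ?_, fun hv w hw => apply_nonneg_of_mem_closedFutureCone hneg hsymm hv
    (futureCone_subset_closedFutureCone hw)⟩
  have hev : 0 ≤ B e v := hsymm v e ▸ hv ⟨he, he⟩
  refine ⟨not_lt.1 fun hvv => ?_, hev⟩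
  obtain ⟨w, hw, hvw⟩ := exists_mem_futureCone_apply_neg hsymm he hev hvv
  exact (hv hw).not_gt hvw

end Orthogonal

section Topology

variable [TopologicalSpace E] [IsTopologicalAddGroup E] [ContinuousSMul ℝ E]

lemma closedFutureCone_subset_closure (hsymm : ∀ v w, B v w = B w v) (he : 0 < B e e) :
    closedFutureCone B e ⊆ closure (futureCone B e) := by
  rintro v ⟨hvv, hev⟩
  have hlim : Tendsto (fun ε : ℝ => v + ε • e) (𝓝[>] 0) (𝓝 v) := by
    refine ((continuous_const.add (continuous_id.smul continuous_const)).tendsto' 0 v ?_).mono_left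
      nhdsWithin_le_nhds
    simp
  refine mem_closure_of_tendsto hlim (eventually_nhdsWithin_of_forall fun ε (hε : 0 < ε) => ⟨?_, ?_⟩)
  · simp only [map_add, map_smul, LinearMap.add_apply, LinearMap.smul_apply, smul_eq_mul]
    rw [hsymm v e]
    positivity
  · simp only [map_add, map_smul, smul_eq_mul]
    positivity

variable [T2Space E] [FiniteDimensional ℝ E]
  (hneg : ∀ w, B e w = 0 → w ≠ 0 → B w w < 0) (hsymm : ∀ v w, B v w = B w v)
include hneg hsymm

theorem closure_futureCone (he : 0 < B e e) : closure (futureCone B e) = closedFutureCone B e := by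
  refine (closure_minimal futureCone_subset_closedFutureCone ?_).antisymm
    (closedFutureCone_subset_closure hsymm he)
  rw [← coe_dual_futureCone hneg hsymm he]
  exact PointedCone.isClosed_dual fun w => LinearMap.continuous_of_finiteDimensional _

theorem connectedComponentIn_eq_futureCone {u : E} (hu : u ∈ futureCone B e) :
    connectedComponentIn {v | 0 < B v v} u = futureCone B e := by
  have hcont : Continuous (B e) := LinearMap.continuous_of_finiteDimensional _
  have hP : connectedComponentIn {v | 0 < B v v} u ⊆ {v | 0 < B v v} :=
    connectedComponentIn_subset _ _
  refine Subset.antisymm (fun v hv => (⟨hP hv, ?_⟩ : 0 < B v v ∧ 0 < B e v))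
    ((convex_futureCone hneg hsymm).isPreconnected.subset_connectedComponentIn hu fun v hv => hv.1)
  have hdisj : Disjoint {v | 0 < B e v} {v | B e v < 0} :=
    disjoint_left.2 fun v (h₁ : 0 < B e v) (h₂ : B e v < 0) => lt_asymm h₁ h₂
  refine isPreconnected_connectedComponentIn.subset_left_of_subset_union
    (isOpen_lt continuous_const hcont) (isOpen_lt hcont continuous_const) hdisj (fun w hw => ?_)
    ⟨u, mem_connectedComponentIn hu.1, hu.2⟩ hv
  exact (apply_ne_zero_of_apply_self_pos hneg (hP hw)).lt_or_gt.symm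

end Topology

end LorentzCone

open LorentzCone in
theorem positive_cone_closure_self_dual_general {n : ℕ}
    (B : (Fin n → ℝ) →ₗ[ℝ] (Fin n → ℝ) →ₗ[ℝ] ℝ)
    (hsymm : ∀ v w, B v w = B w v)
    (hsig : ∃ e : Fin n → ℝ, 0 < B e e ∧ ∀ w, B e w = 0 → w ≠ 0 → B w w < 0)
    (C : Set (Fin n → ℝ))
    (hC : ∃ u, 0 < B u u ∧ C = connectedComponentIn {v | 0 < B v v} u) :
    closure C = {v | ∀ w ∈ C, 0 ≤ B v w} := by
  obtain ⟨e, he, hneg⟩ := hsig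
  obtain ⟨u, hu, rfl⟩ := hC
  obtain ⟨f, hf, hfneg, hfu⟩ :
      ∃ f, 0 < B f f ∧ (∀ w, B f w = 0 → w ≠ 0 → B w w < 0) ∧ 0 < B f u := by
    rcases (apply_ne_zero_of_apply_self_pos hneg hu).lt_or_gt with h | h
    · exact ⟨-e, by simpa using he, fun w hw => hneg w (by simpa using hw), by simpa using h⟩
    · exact ⟨e, he, hneg, h⟩
  rw [connectedComponentIn_eq_futureCone hfneg hsymm ⟨hu, hfu⟩, closure_futureCone hfneg hsymm hf]
  exact (coe_dual_futureCone hfneg hsymm hf).symm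

/-- The closure of the positive cone `C` is self-dual:
`closure C = {v | (v, w) ≥ 0 for all w ∈ C}`. -/
theorem positive_cone_closure_self_dual {n : ℕ} (hn : 2 ≤ n)
    (B : (Fin n → ℝ) →ₗ[ℝ] (Fin n → ℝ) →ₗ[ℝ] ℝ)
    (hsymm : ∀ v w, B v w = B w v)
    (hsig : ∃ e : Fin n → ℝ, 0 < B e e ∧ ∀ w, B e w = 0 → w ≠ 0 → B w w < 0)
    (C : Set (Fin n → ℝ))
    (hC : ∃ u, 0 < B u u ∧ C = connectedComponentIn {v | 0 < B v v} u) :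
    closure C = {v | ∀ w ∈ C, 0 ≤ B v w} :=
  positive_cone_closure_self_dual_general B hsymm hsig C hC
end
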